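/- For every 0 ≤ λ ≤ I(X;Y), every minimiser of the Symmetric Information Bottleneck problem — minimise I_q(X;T_X) + I_q(Y;T_Y) over pairs of channels q(T_X|X), q(T_Y|Y) subject to I_q(T_X;T_Y) ≥ λ, with joint distribution q(x,y,t_X,t_Y) = p(x,y) q(t_X|x) q(t_Y|y) — satisfies I_q(T_X;T_Y) = λ; hence the inequality constraint can be replaced by the equality constraint I_q(T_X;T_Y) = λ without changing the set of minimisers. -/

import Mathlib

noncomputable section

/-- `p` is a probability distribution on the finite set `X × Y`. -/
def IsJointDist {X Y : Type} [Fintype X] [Fintype Y] (p : X → Y → ℝ) : Prop :=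
  (∀ x y, 0 ≤ p x y) ∧ (∑ x, ∑ y, p x y) = 1

/-- Marginal distribution `p(X)`. -/
def margX {X Y : Type} [Fintype Y] (p : X → Y → ℝ) (x : X) : ℝ := ∑ y, p x y

/-- Marginal distribution `p(Y)`. -/
def margY {X Y : Type} [Fintype X] (p : X → Y → ℝ) (y : Y) : ℝ := ∑ x, p x y

/-- Mutual information `I(X;Y)`. -/
def miXY {X Y : Type} [Fintype X] [Fintype Y] (p : X → Y → ℝ) : ℝ :=
  ∑ x, ∑ y, p x y * Real.log (p x y / (margX p x * margY p y))

/-- A channel from `A` to the countable space `ℕ`. -/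
def IsChannelNat {A : Type} (κ : A → ℕ → ℝ) : Prop :=
  (∀ a t, 0 ≤ κ a t) ∧ ∀ a, (∑' t, κ a t) = 1

/-- The joint distribution `p(X,Y)` as a weight on `X × Y`. -/
def jointW {X Y : Type} (p : X → Y → ℝ) : X × Y → ℝ := fun a => p a.1 a.2

/-- The product of the marginals `p(X)p(Y)` as a weight on `X × Y`. -/
def splitW {X Y : Type} [Fintype X] [Fintype Y] (p : X → Y → ℝ) : X × Y → ℝ :=
  fun a => margX p a.1 * margY p a.2

/-- The split channel `κ_X ⊗ κ_Y` from `X × Y` to `T_X × T_Y`. -/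
def tens2 {X Y : Type} (κX : X → ℕ → ℝ) (κY : Y → ℕ → ℝ) : X × Y → ℕ × ℕ → ℝ :=
  fun a s => κX a.1 s.1 * κY a.2 s.2

/-- Pushforward of a weight `w` on `X × Y` through a channel to `T_X × T_Y`. -/
def push2 {X Y : Type} [Fintype X] [Fintype Y] (w : X × Y → ℝ)
    (κ : X × Y → ℕ × ℕ → ℝ) (s : ℕ × ℕ) : ℝ :=
  ∑ a : X × Y, w a * κ a s

/-- Kullback–Leibler divergence between distributions on `T_X × T_Y`. -/
def klNN (u v : ℕ × ℕ → ℝ) : ℝ := ∑' s : ℕ × ℕ, u s * Real.log (u s / v s)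

/-- Mutual information `I_κ(X,Y;T)` between the input (distributed as `w`) and the
output of a channel `κ` from `X × Y` to `T_X × T_Y`. -/
def mi2 {X Y : Type} [Fintype X] [Fintype Y] (w : X × Y → ℝ)
    (κ : X × Y → ℕ × ℕ → ℝ) : ℝ :=
  ∑ a : X × Y, ∑' s : ℕ × ℕ, w a * κ a s * Real.log (κ a s / push2 w κ s)

/-- Marginal `q(T_X)` of the joint `q(x,y,t_X,t_Y) = p(x,y) q(t_X|x) q(t_Y|y)`. -/
def margTX {X Y : Type} [Fintype X] [Fintype Y] (p : X → Y → ℝ)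
    (qX : X → ℕ → ℝ) (t : ℕ) : ℝ :=
  ∑ x, margX p x * qX x t

/-- Marginal `q(T_Y)` of the joint `q(x,y,t_X,t_Y) = p(x,y) q(t_X|x) q(t_Y|y)`. -/
def margTY {X Y : Type} [Fintype X] [Fintype Y] (p : X → Y → ℝ)
    (qY : Y → ℕ → ℝ) (t : ℕ) : ℝ :=
  ∑ y, margY p y * qY y t

/-- Marginal `q(T_X,T_Y)` of the joint `q(x,y,t_X,t_Y) = p(x,y) q(t_X|x) q(t_Y|y)`. -/
def margTT {X Y : Type} [Fintype X] [Fintype Y] (p : X → Y → ℝ)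
    (qX : X → ℕ → ℝ) (qY : Y → ℕ → ℝ) (s : ℕ × ℕ) : ℝ :=
  ∑ x, ∑ y, p x y * qX x s.1 * qY y s.2

/-- Mutual information `I_q(X;T_X)`. -/
def miXTX {X Y : Type} [Fintype X] [Fintype Y] (p : X → Y → ℝ)
    (qX : X → ℕ → ℝ) : ℝ :=
  ∑ x, ∑' t, margX p x * qX x t * Real.log (qX x t / margTX p qX t)

/-- Mutual information `I_q(Y;T_Y)`. -/
def miYTY {X Y : Type} [Fintype X] [Fintype Y] (p : X → Y → ℝ)
    (qY : Y → ℕ → ℝ) : ℝ :=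
  ∑ y, ∑' t, margY p y * qY y t * Real.log (qY y t / margTY p qY t)

/-- Mutual information `I_q(T_X;T_Y)`. -/
def miTT {X Y : Type} [Fintype X] [Fintype Y] (p : X → Y → ℝ)
    (qX : X → ℕ → ℝ) (qY : Y → ℕ → ℝ) : ℝ :=
  ∑' s : ℕ × ℕ, margTT p qX qY s *
    Real.log (margTT p qX qY s / (margTX p qX s.1 * margTY p qY s.2))

/-!
If a feasible pair of channels had `I_q(T_X;T_Y) > λ`, follow `q(T_Y|Y)` by an erasure channel
that keeps its output with probability `c = λ / I_q(T_X;T_Y) < 1`. This multiplies both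
`I_q(T_X;T_Y)` and `I_q(Y;T_Y)` by `c`, so the new pair satisfies `I_q(T_X;T_Y) = λ`, while
`I_q(Y;T_Y) ≥ I_q(T_X;T_Y) > 0` (data processing) strictly decreases: the pair was not a
minimiser. The same construction dominates every pair feasible for `I_q(T_X;T_Y) ≥ λ` by one with
`I_q(T_X;T_Y) = λ`, which identifies the two sets of minimisers.
-/

open Real Finset

lemma sub_le_mul_log_div {u v : ℝ} (hu : 0 ≤ u) (hv : 0 ≤ v) (huv : v = 0 → u = 0) :
    u - v ≤ u * log (u / v) := by
  rcases hu.eq_or_lt with rfl | hu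
  · simpa using hv
  have hv : 0 < v := hv.lt_of_ne fun h => hu.ne' (huv h.symm)
  have h := one_sub_inv_le_log_of_pos (div_pos hu hv)
  rw [inv_div] at h
  calc u - v = u * (1 - v / u) := by field_simp
    _ ≤ u * log (u / v) := mul_le_mul_of_nonneg_left h hu.le

lemma mul_log_div_le_mul_log {u v C : ℝ} (hu : 0 ≤ u) (hv : 0 ≤ v) (h : u ≤ C * v) :
    u * log (u / v) ≤ u * log C := by
  rcases hu.eq_or_lt with rfl | hu
  · simp
  have hv : 0 < v := hv.lt_of_ne fun hv0 => by rw [← hv0, mul_zero] at h; linarith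
  exact mul_le_mul_of_nonneg_left (log_le_log (div_pos hu hv) ((div_le_iff₀ hv).2 h)) hu.le

/-- The log-sum inequality. -/
lemma sum_mul_log_div_le {ι : Type*} (s : Finset ι) {r v : ι → ℝ}
    (hr : ∀ i ∈ s, 0 ≤ r i) (hv : ∀ i ∈ s, 0 ≤ v i) (hrv : ∀ i ∈ s, v i = 0 → r i = 0) :
    (∑ i ∈ s, r i) * log ((∑ i ∈ s, r i) / ∑ i ∈ s, v i) ≤ ∑ i ∈ s, r i * log (r i / v i) := by
  set R := ∑ i ∈ s, r i
  set V := ∑ i ∈ s, v i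
  rcases (sum_nonneg hr).eq_or_lt with hR | hR
  · have hr0 := (sum_eq_zero_iff_of_nonneg hr).1 hR.symm
    rw [show R = 0 from hR.symm, zero_mul, sum_eq_zero fun i hi => by rw [hr0 i hi, zero_mul]]
  obtain ⟨j, hj, hrj⟩ := exists_ne_zero_of_sum_ne_zero hR.ne'
  have hV : 0 < V := ((hv j hj).lt_of_ne fun h => hrj (hrv j hj h.symm)).trans_le
    (single_le_sum hv hj)
  set k := R / V
  have hk : 0 < k := div_pos hR hV
  have hterm : ∀ i ∈ s, r i * log k + (r i - k * v i) ≤ r i * log (r i / v i) := by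
    intro i hi
    rcases (hr i hi).eq_or_lt with h0 | hpos
    · rw [← h0]; nlinarith [hv i hi]
    have hvi : 0 < v i := (hv i hi).lt_of_ne fun h => hpos.ne' (hrv i hi h.symm)
    have hgibbs := sub_le_mul_log_div hpos.le (mul_pos hk hvi).le fun h => absurd h (by positivity)
    rw [div_mul_eq_div_div_swap, log_div (by positivity) hk.ne'] at hgibbs
    linarith
  calc R * log k = ∑ i ∈ s, (r i * log k + (r i - k * v i)) := by
        rw [sum_add_distrib, sum_sub_distrib, ← sum_mul, ← mul_sum, div_mul_cancel₀ _ hV.ne']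
        ring
    _ ≤ ∑ i ∈ s, r i * log (r i / v i) := sum_le_sum hterm

lemma summable_mul_log_div_of_le {α : Type*} {f g : α → ℝ} {C : ℝ} (hf0 : ∀ a, 0 ≤ f a)
    (hg0 : ∀ a, 0 ≤ g a) (hf : Summable f) (hg : Summable g) (hfg : ∀ a, f a ≤ C * g a) :
    Summable fun a => f a * log (f a / g a) := by
  refine .of_norm_bounded ((hf.mul_right |log C|).add hg) fun a => ?_
  have hlo := sub_le_mul_log_div (hf0 a) (hg0 a) fun h => le_antisymm
    (by simpa [h] using hfg a) (hf0 a)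
  have hhi := mul_log_div_le_mul_log (hf0 a) (hg0 a) (hfg a)
  have habs : f a * log C ≤ f a * |log C| := mul_le_mul_of_nonneg_left (le_abs_self _) (hf0 a)
  have hpos : 0 ≤ f a * |log C| := mul_nonneg (hf0 a) (abs_nonneg _)
  rw [Real.norm_eq_abs, abs_le]
  constructor <;> linarith [hf0 a, hg0 a]

lemma mul_mul_log_mul_div_mul (c a b : ℝ) :
    c * a * log (c * a / (c * b)) = c * (a * log (a / b)) := by
  rcases eq_or_ne c 0 with rfl | hc
  · simp
  · rw [mul_div_mul_left _ _ hc]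
    ring

namespace IsChannelNat

variable {A : Type} {q : A → ℕ → ℝ}

lemma nonneg (hq : IsChannelNat q) (a : A) (t : ℕ) : 0 ≤ q a t := hq.1 a t

lemma summable (hq : IsChannelNat q) (a : A) : Summable (q a) := by
  by_contra h
  have h1 := hq.2 a
  rw [tsum_eq_zero_of_not_summable h] at h1
  exact zero_ne_one h1

lemma hasSum (hq : IsChannelNat q) (a : A) : HasSum (q a) 1 :=
  hq.2 a ▸ (hq.summable a).hasSum

end IsChannelNat

/-- `q` followed by an erasure channel with erasure probability `1 - c`; the erasure symbol is `0`
and the other outputs are shifted by one. -/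
def withErasure (c : ℝ) {A : Type} (q : A → ℕ → ℝ) : A → ℕ → ℝ
  | _, 0 => 1 - c
  | a, t + 1 => c * q a t

lemma isChannelNat_withErasure {A : Type} {q : A → ℕ → ℝ} (hq : IsChannelNat q) {c : ℝ}
    (hc0 : 0 ≤ c) (hc1 : c ≤ 1) : IsChannelNat (withErasure c q) := by
  refine ⟨fun a t => ?_, fun a => ?_⟩
  · cases t with
    | zero => exact sub_nonneg.2 hc1
    | succ t => exact mul_nonneg hc0 (hq.nonneg a t)
  · have hsucc : Summable fun t => withErasure c q a (t + 1) := (hq.summable a).mul_left c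
    rw [((summable_nat_add_iff 1).1 hsucc).tsum_eq_zero_add]
    simp only [withErasure, tsum_mul_left, hq.2 a]
    ring

section JointDistribution

variable {X Y : Type} [Fintype X] [Fintype Y] {p : X → Y → ℝ}
  {qX : X → ℕ → ℝ} {qY : Y → ℕ → ℝ} {c lam : ℝ}

lemma le_margX (hp : IsJointDist p) (x : X) (y : Y) : p x y ≤ margX p x :=
  single_le_sum (fun y' _ => hp.1 x y') (mem_univ y)

lemma le_margY (hp : IsJointDist p) (x : X) (y : Y) : p x y ≤ margY p y :=
  single_le_sum (fun x' _ => hp.1 x' y) (mem_univ x)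

lemma margX_nonneg (hp : IsJointDist p) (x : X) : 0 ≤ margX p x :=
  sum_nonneg fun y _ => hp.1 x y

lemma margY_nonneg (hp : IsJointDist p) (y : Y) : 0 ≤ margY p y :=
  sum_nonneg fun x _ => hp.1 x y

lemma sum_margY (hp : IsJointDist p) : ∑ y, margY p y = 1 := by
  rw [← hp.2, sum_comm]; rfl

lemma exists_le_mul_margX_mul_margY (hp : IsJointDist p) :
    ∃ C, ∀ x y, p x y ≤ C * (margX p x * margY p y) := by
  refine ⟨∑ x, ∑ y, p x y / (margX p x * margY p y), fun x y => ?_⟩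
  have hprod := mul_nonneg (margX_nonneg hp x) (margY_nonneg hp y)
  rcases hprod.eq_or_lt with h | h
  · rw [← h, mul_zero]
    rcases mul_eq_zero.1 h.symm with h | h
    · exact h ▸ le_margX hp x y
    · exact h ▸ le_margY hp x y
  have hnn : ∀ x' y', 0 ≤ p x' y' / (margX p x' * margY p y') := fun x' y' =>
    div_nonneg (hp.1 x' y') (mul_nonneg (margX_nonneg hp x') (margY_nonneg hp y'))
  rw [← div_le_iff₀ h]
  exact (single_le_sum (fun y' _ => hnn x y') (mem_univ y)).trans
    (single_le_sum (fun x' _ => sum_nonneg fun y' _ => hnn x' y') (mem_univ x))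

lemma margTX_nonneg (hp : IsJointDist p) (hqX : IsChannelNat qX) (s : ℕ) :
    0 ≤ margTX p qX s :=
  sum_nonneg fun x _ => mul_nonneg (margX_nonneg hp x) (hqX.nonneg x s)

lemma margTY_nonneg (hp : IsJointDist p) (hqY : IsChannelNat qY) (t : ℕ) :
    0 ≤ margTY p qY t :=
  sum_nonneg fun y _ => mul_nonneg (margY_nonneg hp y) (hqY.nonneg y t)

lemma margTT_nonneg (hp : IsJointDist p) (hqX : IsChannelNat qX) (hqY : IsChannelNat qY)
    (u : ℕ × ℕ) : 0 ≤ margTT p qX qY u :=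
  sum_nonneg fun x _ => sum_nonneg fun y _ =>
    mul_nonneg (mul_nonneg (hp.1 x y) (hqX.nonneg x u.1)) (hqY.nonneg y u.2)

lemma mul_le_margTY (hp : IsJointDist p) (hqY : IsChannelNat qY) (y : Y) (t : ℕ) :
    margY p y * qY y t ≤ margTY p qY t :=
  single_le_sum (fun y' _ => mul_nonneg (margY_nonneg hp y') (hqY.nonneg y' t)) (mem_univ y)

lemma summable_margTX (hqX : IsChannelNat qX) : Summable (margTX p qX) :=
  summable_sum fun x _ => (hqX.summable x).mul_left _

lemma summable_margTY (hqY : IsChannelNat qY) : Summable (margTY p qY) :=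
  summable_sum fun y _ => (hqY.summable y).mul_left _

lemma summable_mul_log_div_margTT (hp : IsJointDist p) (hqX : IsChannelNat qX)
    (hqY : IsChannelNat qY) :
    Summable fun u : ℕ × ℕ => margTT p qX qY u *
      log (margTT p qX qY u / (margTX p qX u.1 * margTY p qY u.2)) := by
  obtain ⟨C, hC⟩ := exists_le_mul_margX_mul_margY hp
  have hle : ∀ u : ℕ × ℕ, margTT p qX qY u ≤ C * (margTX p qX u.1 * margTY p qY u.2) := by
    intro u
    rw [margTX, margTY, sum_mul_sum, mul_sum, margTT]
    refine sum_le_sum fun x _ => ?_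
    rw [mul_sum]
    refine sum_le_sum fun y _ => ?_
    have := mul_le_mul_of_nonneg_right (hC x y)
      (mul_nonneg (hqX.nonneg x u.1) (hqY.nonneg y u.2))
    linarith
  have hAB : Summable fun u : ℕ × ℕ => margTX p qX u.1 * margTY p qY u.2 :=
    (summable_margTX hqX).mul_of_nonneg (summable_margTY hqY) (margTX_nonneg hp hqX)
      (margTY_nonneg hp hqY)
  have hM : Summable (margTT p qX qY) :=
    .of_nonneg_of_le (margTT_nonneg hp hqX hqY) hle (hAB.mul_left C)
  exact summable_mul_log_div_of_le (margTT_nonneg hp hqX hqY)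
    (fun u => mul_nonneg (margTX_nonneg hp hqX u.1) (margTY_nonneg hp hqY u.2)) hM hAB hle

lemma summable_mul_mul_log_div_margTY (hp : IsJointDist p) (hqY : IsChannelNat qY) (x : X)
    (y : Y) : Summable fun t => p x y * (qY y t * log (qY y t / margTY p qY t)) := by
  rcases (hp.1 x y).eq_or_lt with h | h
  · simp [← h]
  have hy : 0 < margY p y := h.trans_le (le_margY hp x y)
  refine .mul_left _ (summable_mul_log_div_of_le (C := (margY p y)⁻¹) (hqY.nonneg y)
    (margTY_nonneg hp hqY) (hqY.summable y) (summable_margTY hqY) fun t => ?_)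
  rw [le_inv_mul_iff₀ hy]
  exact mul_le_margTY hp hqY y t

/-- `I(Y;T_Y)` written as a sum over the outputs `(t_X, t_Y)`. -/
lemma hasSum_miYTY (hp : IsJointDist p) (hqX : IsChannelNat qX) (hqY : IsChannelNat qY) :
    HasSum (fun u : ℕ × ℕ => ∑ a : X × Y,
      qX a.1 u.1 * (p a.1 a.2 * (qY a.2 u.2 * log (qY a.2 u.2 / margTY p qY u.2))))
      (miYTY p qY) := by
  have hterm : ∀ a : X × Y, HasSum (fun u : ℕ × ℕ =>
      qX a.1 u.1 * (p a.1 a.2 * (qY a.2 u.2 * log (qY a.2 u.2 / margTY p qY u.2))))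
      (1 * ∑' t, p a.1 a.2 * (qY a.2 t * log (qY a.2 t / margTY p qY t))) := fun a => by
    have hrow := summable_mul_mul_log_div_margTY hp hqY a.1 a.2
    exact HasSum.mul (f := qX a.1)
      (g := fun t => p a.1 a.2 * (qY a.2 t * log (qY a.2 t / margTY p qY t)))
      (hqX.hasSum a.1) hrow.hasSum
      (summable_mul_of_summable_norm (hqX.summable a.1).norm hrow.norm)
  suffices h : ∑ a : X × Y, 1 * ∑' t, p a.1 a.2 * (qY a.2 t * log (qY a.2 t / margTY p qY t))
      = miYTY p qY from h ▸ hasSum_sum fun a _ => hterm a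
  simp only [miYTY, one_mul, tsum_mul_left, Fintype.sum_prod_type]
  rw [sum_comm]
  refine sum_congr rfl fun y _ => ?_
  rw [← sum_mul, ← tsum_mul_left]
  exact tsum_congr fun t => by rw [margY]; ring

lemma margTT_mul_log_le (hp : IsJointDist p) (hqX : IsChannelNat qX) (hqY : IsChannelNat qY)
    (u : ℕ × ℕ) :
    margTT p qX qY u * log (margTT p qX qY u / (margTX p qX u.1 * margTY p qY u.2)) ≤
      ∑ a : X × Y,
        qX a.1 u.1 * (p a.1 a.2 * (qY a.2 u.2 * log (qY a.2 u.2 / margTY p qY u.2))) := by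
  set r : X × Y → ℝ := fun a => p a.1 a.2 * qX a.1 u.1 * qY a.2 u.2
  set v : X × Y → ℝ := fun a => p a.1 a.2 * qX a.1 u.1 * margTY p qY u.2
  have hr : ∑ a, r a = margTT p qX qY u := by simp only [r, margTT, Fintype.sum_prod_type]
  have hv : ∑ a, v a = margTX p qX u.1 * margTY p qY u.2 := by
    simp only [v, margTX, margX, Fintype.sum_prod_type, ← sum_mul]
  have hrv : ∀ a : X × Y, v a = 0 → r a = 0 := by
    rintro ⟨x, y⟩ h
    rcases mul_eq_zero.1 h with h | h
    · simp only [r, h, zero_mul]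
    · have : p x y * qY y u.2 = 0 := le_antisymm
        (((mul_le_mul_of_nonneg_right (le_margY hp x y) (hqY.nonneg y u.2)).trans
          (mul_le_margTY hp hqY y u.2)).trans_eq h)
        (mul_nonneg (hp.1 x y) (hqY.nonneg y u.2))
      simp only [r]
      linear_combination qX x u.1 * this
  have hterm : ∀ a : X × Y, r a * log (r a / v a) =
      qX a.1 u.1 * (p a.1 a.2 * (qY a.2 u.2 * log (qY a.2 u.2 / margTY p qY u.2))) := by
    intro a
    by_cases h : p a.1 a.2 * qX a.1 u.1 = 0
    · simp only [r, h, zero_mul]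
      linear_combination -(qY a.2 u.2 * log (qY a.2 u.2 / margTY p qY u.2)) * h
    · simp only [r, v]
      rw [mul_div_mul_left _ _ h]
      ring
  calc _ = (∑ a, r a) * log ((∑ a, r a) / ∑ a, v a) := by rw [hr, hv]
    _ ≤ ∑ a, r a * log (r a / v a) :=
      sum_mul_log_div_le _ (fun a _ => mul_nonneg (mul_nonneg (hp.1 _ _) (hqX.nonneg _ _))
        (hqY.nonneg _ _))
        (fun a _ => mul_nonneg (mul_nonneg (hp.1 _ _) (hqX.nonneg _ _))
          (margTY_nonneg hp hqY _)) fun a _ => hrv a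
    _ = _ := sum_congr rfl fun a _ => hterm a

/-- The data-processing inequality `I(T_X;T_Y) ≤ I(Y;T_Y)`. -/
theorem miTT_le_miYTY (hp : IsJointDist p) (hqX : IsChannelNat qX) (hqY : IsChannelNat qY) :
    miTT p qX qY ≤ miYTY p qY := by
  rw [← (hasSum_miYTY hp hqX hqY).tsum_eq]
  exact (summable_mul_log_div_margTT hp hqX hqY).tsum_le_tsum (margTT_mul_log_le hp hqX hqY)
    (hasSum_miYTY hp hqX hqY).summable

lemma margTY_withErasure_zero (hp : IsJointDist p) : margTY p (withErasure c qY) 0 = 1 - c := by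
  simp only [margTY, withErasure, ← sum_mul, sum_margY hp, one_mul]

lemma margTY_withErasure_succ (t : ℕ) :
    margTY p (withErasure c qY) (t + 1) = c * margTY p qY t := by
  simp only [margTY, withErasure, mul_sum]
  exact sum_congr rfl fun y _ => by ring

lemma margTT_withErasure_zero (s : ℕ) :
    margTT p qX (withErasure c qY) (s, 0) = (1 - c) * margTX p qX s := by
  simp only [margTT, margTX, margX, withErasure, mul_sum, sum_mul]
  exact sum_congr rfl fun x _ => sum_congr rfl fun y _ => by ring

lemma margTT_withErasure_succ (s t : ℕ) :
    margTT p qX (withErasure c qY) (s, t + 1) = c * margTT p qX qY (s, t) := by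
  simp only [margTT, withErasure, mul_sum]
  exact sum_congr rfl fun x _ => sum_congr rfl fun y _ => by ring

lemma miYTY_withErasure (hp : IsJointDist p) :
    miYTY p (withErasure c qY) = c * miYTY p qY := by
  simp only [miYTY, mul_sum]
  refine sum_congr rfl fun y _ => ?_
  rw [← tsum_mul_left, ← (Nat.succ_injective).tsum_eq]
  · refine tsum_congr fun t => ?_
    simp only [margTY_withErasure_succ, withErasure]
    rw [mul_assoc, mul_mul_log_mul_div_mul]
    ring
  · rintro (_ | t) h
    · simp [withErasure, margTY_withErasure_zero hp] at h
    · exact ⟨t, rfl⟩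

lemma miTT_withErasure (hp : IsJointDist p) :
    miTT p qX (withErasure c qY) = c * miTT p qX qY := by
  have hinj : Function.Injective fun u : ℕ × ℕ => (u.1, u.2 + 1) :=
    fun u v h => Prod.ext (Prod.ext_iff.1 h).1 (Nat.succ_injective (Prod.ext_iff.1 h).2)
  rw [miTT, miTT, ← tsum_mul_left, ← hinj.tsum_eq]
  · refine tsum_congr fun u => ?_
    rw [margTT_withErasure_succ, margTY_withErasure_succ, mul_left_comm _ c,
      mul_mul_log_mul_div_mul]
  · rintro ⟨s, _ | t⟩ h
    · simp [margTT_withErasure_zero, margTY_withErasure_zero hp, mul_comm] at h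
    · exact ⟨(s, t), rfl⟩

lemma exists_channel_miTT_eq_of_lt (hp : IsJointDist p) (hqX : IsChannelNat qX)
    (hqY : IsChannelNat qY) (hlam : 0 ≤ lam) (hlt : lam < miTT p qX qY) :
    ∃ qY', IsChannelNat qY' ∧ miTT p qX qY' = lam ∧ miYTY p qY' < miYTY p qY := by
  have hI : 0 < miTT p qX qY := hlam.trans_lt hlt
  have hc1 : lam / miTT p qX qY < 1 := (div_lt_one hI).2 hlt
  refine ⟨withErasure (lam / miTT p qX qY) qY,
    isChannelNat_withErasure hqY (div_nonneg hlam hI.le) hc1.le, ?_, ?_⟩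
  · rw [miTT_withErasure hp, div_mul_cancel₀ _ hI.ne']
  · rw [miYTY_withErasure hp]
    exact mul_lt_of_lt_one_left (hI.trans_le (miTT_le_miYTY hp hqX hqY)) hc1

lemma exists_channel_miTT_eq_of_le (hp : IsJointDist p) (hqX : IsChannelNat qX)
    (hqY : IsChannelNat qY) (hlam : 0 ≤ lam) (hle : lam ≤ miTT p qX qY) :
    ∃ qY', IsChannelNat qY' ∧ miTT p qX qY' = lam ∧ miYTY p qY' ≤ miYTY p qY := by
  rcases hle.eq_or_lt with h | h
  · exact ⟨qY, hqY, h.symm, le_rfl⟩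
  · obtain ⟨qY', hqY', hI, hlt⟩ := exists_channel_miTT_eq_of_lt hp hqX hqY hlam h
    exact ⟨qY', hqY', hI, hlt.le⟩

end JointDistribution

theorem sib_minimisers_saturate_general {X Y : Type} [Fintype X] [Fintype Y]
    (p : X → Y → ℝ) (hp : IsJointDist p)
    (lam : ℝ) (hlam0 : 0 ≤ lam) :
    (∀ (qX : X → ℕ → ℝ) (qY : Y → ℕ → ℝ), IsChannelNat qX → IsChannelNat qY →
      lam ≤ miTT p qX qY →
      (∀ (qX' : X → ℕ → ℝ) (qY' : Y → ℕ → ℝ), IsChannelNat qX' → IsChannelNat qY' →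
        lam ≤ miTT p qX' qY' → miXTX p qX + miYTY p qY ≤ miXTX p qX' + miYTY p qY') →
      miTT p qX qY = lam) ∧
    ({qp : (X → ℕ → ℝ) × (Y → ℕ → ℝ) |
        IsChannelNat qp.1 ∧ IsChannelNat qp.2 ∧ lam ≤ miTT p qp.1 qp.2 ∧
        ∀ qp' : (X → ℕ → ℝ) × (Y → ℕ → ℝ), IsChannelNat qp'.1 → IsChannelNat qp'.2 →
          lam ≤ miTT p qp'.1 qp'.2 →
          miXTX p qp.1 + miYTY p qp.2 ≤ miXTX p qp'.1 + miYTY p qp'.2} =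
      {qp : (X → ℕ → ℝ) × (Y → ℕ → ℝ) |
        IsChannelNat qp.1 ∧ IsChannelNat qp.2 ∧ miTT p qp.1 qp.2 = lam ∧
        ∀ qp' : (X → ℕ → ℝ) × (Y → ℕ → ℝ), IsChannelNat qp'.1 → IsChannelNat qp'.2 →
          miTT p qp'.1 qp'.2 = lam →
          miXTX p qp.1 + miYTY p qp.2 ≤ miXTX p qp'.1 + miYTY p qp'.2}) := by
  have saturate : ∀ (qX : X → ℕ → ℝ) (qY : Y → ℕ → ℝ), IsChannelNat qX → IsChannelNat qY →
      lam ≤ miTT p qX qY →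
      (∀ (qX' : X → ℕ → ℝ) (qY' : Y → ℕ → ℝ), IsChannelNat qX' → IsChannelNat qY' →
        lam ≤ miTT p qX' qY' → miXTX p qX + miYTY p qY ≤ miXTX p qX' + miYTY p qY') →
      miTT p qX qY = lam := by
    intro qX qY hqX hqY hle hmin
    refine hle.eq_or_lt.elim Eq.symm fun hlt => ?_
    obtain ⟨qY', hqY', hI, hlt'⟩ := exists_channel_miTT_eq_of_lt hp hqX hqY hlam0 hlt
    linarith [hmin qX qY' hqX hqY' hI.ge]
  refine ⟨saturate, Set.ext fun qp => ⟨?_, ?_⟩⟩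
  · rintro ⟨hq₁, hq₂, hle, hmin⟩
    exact ⟨hq₁, hq₂, saturate _ _ hq₁ hq₂ hle fun qX' qY' => hmin (qX', qY'),
      fun qp' h₁ h₂ hI => hmin qp' h₁ h₂ hI.ge⟩
  · rintro ⟨hq₁, hq₂, hI, hmin⟩
    refine ⟨hq₁, hq₂, hI.ge, fun qp' h₁ h₂ hle => ?_⟩
    obtain ⟨qY', hqY', hI', hle'⟩ := exists_channel_miTT_eq_of_le hp h₁ h₂ hlam0 hle
    linarith [hmin (qp'.1, qY') h₁ hqY' hI']

/-- For every `0 ≤ λ ≤ I(X;Y)`, every minimiser of the Symmetric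
Information Bottleneck problem — minimise `I_q(X;T_X) + I_q(Y;T_Y)` over pairs of
channels `q(T_X|X), q(T_Y|Y)` subject to `I_q(T_X;T_Y) ≥ λ`, with joint distribution
`q(x,y,t_X,t_Y) = p(x,y) q(t_X|x) q(t_Y|y)` — satisfies `I_q(T_X;T_Y) = λ`; hence
the inequality constraint can be replaced by the equality constraint without
changing the set of minimisers. -/
theorem sib_minimisers_saturate {X Y : Type} [Fintype X] [Fintype Y]
    (p : X → Y → ℝ) (hp : IsJointDist p)
    (lam : ℝ) (hlam0 : 0 ≤ lam) (hlam1 : lam ≤ miXY p) :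
    (∀ (qX : X → ℕ → ℝ) (qY : Y → ℕ → ℝ), IsChannelNat qX → IsChannelNat qY →
      lam ≤ miTT p qX qY →
      (∀ (qX' : X → ℕ → ℝ) (qY' : Y → ℕ → ℝ), IsChannelNat qX' → IsChannelNat qY' →
        lam ≤ miTT p qX' qY' → miXTX p qX + miYTY p qY ≤ miXTX p qX' + miYTY p qY') →
      miTT p qX qY = lam) ∧
    ({qp : (X → ℕ → ℝ) × (Y → ℕ → ℝ) |
        IsChannelNat qp.1 ∧ IsChannelNat qp.2 ∧ lam ≤ miTT p qp.1 qp.2 ∧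
        ∀ qp' : (X → ℕ → ℝ) × (Y → ℕ → ℝ), IsChannelNat qp'.1 → IsChannelNat qp'.2 →
          lam ≤ miTT p qp'.1 qp'.2 →
          miXTX p qp.1 + miYTY p qp.2 ≤ miXTX p qp'.1 + miYTY p qp'.2} =
      {qp : (X → ℕ → ℝ) × (Y → ℕ → ℝ) |
        IsChannelNat qp.1 ∧ IsChannelNat qp.2 ∧ miTT p qp.1 qp.2 = lam ∧
        ∀ qp' : (X → ℕ → ℝ) × (Y → ℕ → ℝ), IsChannelNat qp'.1 → IsChannelNat qp'.2 →
          miTT p qp'.1 qp'.2 = lam →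
          miXTX p qp.1 + miYTY p qp.2 ≤ miXTX p qp'.1 + miYTY p qp'.2}) :=
  sib_minimisers_saturate_general p hp lam hlam0
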